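/- arXiv:2107.08678 — 2 statements merged into one kernel-verified Lean document; each statement's English description precedes it below -/
import Mathlib

section
/- Let a and q be nonzero complex numbers such that q^{2k} ≠ 1 for every integer k with 1 ≤ k ≤ n. Then for every integer n ≥ 0, a^{2n} q^{2n(n-1)} = Σ_{i=0}^{n} a^{i} q^{i(i-1)/2} · [n choose i]_q · {n+i-2; a}_i. -/
open Finset

/-- The balanced q-bracket `{n} = q^n - q^(-n)`. -/
noncomputable def qbr (q : ℂ) (n : ℤ) : ℂ := q ^ n - q ^ (-n)

/-- The two-variable bracket `{n; a} = a q^n - a⁻¹ q^(-n)`. -/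
noncomputable def qbrA (a q : ℂ) (n : ℤ) : ℂ := a * q ^ n - a⁻¹ * q ^ (-n)

/-- Descending product `{n}_i = {n}{n-1}⋯{n-i+1}` (equal to 1 when `i = 0`). -/
noncomputable def qbrP (q : ℂ) (n : ℤ) (i : ℕ) : ℂ := ∏ k ∈ Finset.range i, qbr q (n - k)

/-- Descending product `{n; a}_i = {n; a}{n-1; a}⋯{n-i+1; a}` (equal to 1 when `i = 0`). -/
noncomputable def qbrAP (a q : ℂ) (n : ℤ) (i : ℕ) : ℂ := ∏ k ∈ Finset.range i, qbrA a q (n - k)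

/-- Ascending product `{n; a}{n+1; a}⋯{n+i-1; a}` (used for `{-n; a}_i`, equal to 1 when `i = 0`). -/
noncomputable def qbrAPasc (a q : ℂ) (n : ℤ) (i : ℕ) : ℂ := ∏ k ∈ Finset.range i, qbrA a q (n + k)

/-- The factorial `{n}! = {n}_n`. -/
noncomputable def qfac (q : ℂ) (n : ℕ) : ℂ := qbrP q n n

/-- The balanced q-binomial coefficient `[n choose i] = {n}!/({i}!{n-i}!)`. -/
noncomputable def qbinom (q : ℂ) (n i : ℕ) : ℂ := qfac q n / (qfac q i * qfac q (n - i))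

/-!
Put `s = q⁻²` and `b = a qⁿ⁻¹`. Pulling a power of `q` out of every bracket gives
`[n choose i]_q = q^(i(n-i)) [n choose i]_s` with `[n choose i]_s` the Gaussian binomial coefficient
(the hypothesis `q^(2k) ≠ 1` keeps the denominators of `[n choose i]_q` nonzero), and
`{n+i-2; a}_i = q^(i(i-1)/2) b⁻ⁱ ∏_{j<i} (b² - sʲ)`. The powers of `a` and `q` in the `i`-th summand
then multiply to `bⁱ` and cancel, and what remains is `(b²)ⁿ = ∑ᵢ [n choose i]_s ∏_{j<i} (b² - sʲ)`,
the `s`-analogue of `xⁿ = ∑ᵢ (n choose i) (x - 1)ⁱ`, which follows from the `s`-Pascal rule by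
induction on `n`.
-/

section GaussBinom

variable {R : Type*} [CommRing R]

def gaussBinom (s : R) : ℕ → ℕ → R
  | _, 0 => 1
  | 0, _ + 1 => 0
  | n + 1, i + 1 => gaussBinom s n i + s ^ (i + 1) * gaussBinom s n (i + 1)

/-- `(1 - s)ᵐ` times the `s`-factorial `[m]_s!`. -/
def oneSubPowProd (s : R) (m : ℕ) : R := ∏ k ∈ range m, (1 - s ^ (k + 1))

@[simp]
lemma gaussBinom_zero_right (s : R) (n : ℕ) : gaussBinom s n 0 = 1 := by
  cases n <;> rfl

lemma gaussBinom_succ_succ (s : R) (n i : ℕ) :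
    gaussBinom s (n + 1) (i + 1) = gaussBinom s n i + s ^ (i + 1) * gaussBinom s n (i + 1) :=
  rfl

lemma gaussBinom_eq_zero_of_lt (s : R) {n i : ℕ} (h : n < i) : gaussBinom s n i = 0 := by
  induction n generalizing i with
  | zero => cases i with
    | zero => omega
    | succ i => rfl
  | succ n ih => cases i with
    | zero => omega
    | succ i => rw [gaussBinom_succ_succ, ih (by omega), ih (by omega), mul_zero, add_zero]

@[simp]
lemma gaussBinom_self (s : R) (n : ℕ) : gaussBinom s n n = 1 := by
  induction n with
  | zero => rfl
  | succ n ih =>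
    rw [gaussBinom_succ_succ, ih, gaussBinom_eq_zero_of_lt s n.lt_succ_self, mul_zero, add_zero]

def qFalling (s x : R) (i : ℕ) : R := ∏ j ∈ range i, (x - s ^ j)

lemma qFalling_succ (s x : R) (i : ℕ) : qFalling s x (i + 1) = qFalling s x i * (x - s ^ i) :=
  prod_range_succ _ _

theorem pow_eq_sum_gaussBinom_mul_qFalling (s x : R) (n : ℕ) :
    x ^ n = ∑ i ∈ range (n + 1), gaussBinom s n i * qFalling s x i := by
  induction n with
  | zero => simp [qFalling]
  | succ n ih =>
    have hshift : ∑ i ∈ range (n + 1), s ^ i * gaussBinom s n i * qFalling s x i =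
        ∑ i ∈ range (n + 1), s ^ (i + 1) * gaussBinom s n (i + 1) * qFalling s x (i + 1) +
          1 * qFalling s x 0 := by
      have h := sum_range_succ' (fun i => s ^ i * gaussBinom s n i * qFalling s x i) (n + 1)
      rw [sum_range_succ, gaussBinom_eq_zero_of_lt s n.lt_succ_self] at h
      simpa using h
    rw [sum_range_succ', gaussBinom_zero_right]
    simp only [gaussBinom_succ_succ, add_mul, sum_add_distrib]
    rw [pow_succ', ih, mul_sum, add_assoc, ← hshift, ← sum_add_distrib]
    refine sum_congr rfl fun i _ => ?_
    rw [qFalling_succ]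
    ring

lemma oneSubPowProd_succ (s : R) (m : ℕ) :
    oneSubPowProd s (m + 1) = oneSubPowProd s m * (1 - s ^ (m + 1)) :=
  prod_range_succ _ _

theorem gaussBinom_add_mul_oneSubPowProd (s : R) (i m : ℕ) :
    gaussBinom s (i + m) i * (oneSubPowProd s i * oneSubPowProd s m) =
      oneSubPowProd s (i + m) := by
  induction m generalizing i with
  | zero => simp [oneSubPowProd]
  | succ m ihm =>
    induction i with
    | zero => simp [oneSubPowProd]
    | succ i ihi =>
      have hstep := ihm (i + 1)
      rw [show i + 1 + m = i + (m + 1) by ring, oneSubPowProd_succ s i] at hstep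
      rw [oneSubPowProd_succ s m] at ihi
      rw [show i + 1 + (m + 1) = i + (m + 1) + 1 by ring, gaussBinom_succ_succ,
        oneSubPowProd_succ s (i + (m + 1)), oneSubPowProd_succ s i, oneSubPowProd_succ s m]
      linear_combination (1 - s ^ (i + 1)) * ihi + s ^ (i + 1) * (1 - s ^ (m + 1)) * hstep

lemma oneSubPowProd_ne_zero [IsDomain R] {s : R} {m : ℕ}
    (hs : ∀ k : ℕ, 1 ≤ k → k ≤ m → s ^ k ≠ 1) : oneSubPowProd s m ≠ 0 :=
  prod_ne_zero_iff.mpr fun k hk =>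
    sub_ne_zero.mpr (hs (k + 1) le_add_self (mem_range.mp hk)).symm

end GaussBinom

lemma inv_sq_pow {M : Type*} [DivisionMonoid M] (q : M) (k : ℕ) :
    ((q ^ 2)⁻¹) ^ k = ((q ^ k)⁻¹) ^ 2 := by
  rw [inv_pow, inv_pow, pow_right_comm]

lemma qbr_natCast (q : ℂ) (hq : q ≠ 0) (k : ℕ) : qbr q k = q ^ k * (1 - ((q ^ 2)⁻¹) ^ k) := by
  rw [qbr, zpow_neg, zpow_natCast, inv_sq_pow]
  field_simp

lemma qfac_eq_prod_mul_oneSubPowProd (q : ℂ) (hq : q ≠ 0) (n : ℕ) :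
    qfac q n = (∏ k ∈ range n, q ^ (k + 1)) * oneSubPowProd (q ^ 2)⁻¹ n := by
  rw [qfac, qbrP, oneSubPowProd, ← prod_mul_distrib,
    ← prod_range_reflect (fun k => q ^ (k + 1) * (1 - ((q ^ 2)⁻¹) ^ (k + 1)))]
  refine prod_congr rfl fun k hk => ?_
  rw [← qbr_natCast q hq]
  have := mem_range.mp hk
  congr 1
  omega

lemma qbinom_eq_mul_gaussBinom (q : ℂ) (hq : q ≠ 0) {n i : ℕ} (hi : i ≤ n)
    (hroot : ∀ k : ℕ, 1 ≤ k → k ≤ n → q ^ (2 * k) ≠ 1) :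
    qbinom q n i = q ^ (i * (n - i)) * gaussBinom (q ^ 2)⁻¹ n i := by
  obtain ⟨m, rfl⟩ := Nat.exists_eq_add_of_le hi
  have hs (k : ℕ) (hk : 1 ≤ k) (hkn : k ≤ i + m) : ((q ^ 2)⁻¹) ^ k ≠ 1 := by
    rw [inv_pow, ← pow_mul, inv_ne_one]
    exact hroot k hk hkn
  have hFi : oneSubPowProd (q ^ 2)⁻¹ i ≠ 0 :=
    oneSubPowProd_ne_zero fun k hk hki => hs k hk (by omega)
  have hFm : oneSubPowProd (q ^ 2)⁻¹ m ≠ 0 :=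
    oneSubPowProd_ne_zero fun k hk hkm => hs k hk (by omega)
  have hQ (l : ℕ) : ∏ k ∈ range l, q ^ (k + 1) ≠ 0 :=
    prod_ne_zero_iff.mpr fun _ _ => pow_ne_zero _ hq
  have hshift : ∏ k ∈ range m, q ^ (i + k + 1) = q ^ (i * m) * ∏ k ∈ range m, q ^ (k + 1) := by
    simp only [add_assoc, pow_add q i, prod_mul_distrib, prod_const, card_range, pow_mul]
  rw [qbinom, Nat.add_sub_cancel_left, qfac_eq_prod_mul_oneSubPowProd q hq,
    qfac_eq_prod_mul_oneSubPowProd q hq, qfac_eq_prod_mul_oneSubPowProd q hq, prod_range_add,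
    hshift, ← gaussBinom_add_mul_oneSubPowProd, div_eq_iff (by simp [hQ, hFi, hFm])]
  ring

lemma qbrA_add (a q : ℂ) (hq : q ≠ 0) (m j : ℤ) : qbrA a q (m + j) = qbrA (a * q ^ m) q j := by
  simp only [qbrA, zpow_add₀ hq, neg_add, mul_inv, zpow_neg]
  ring

lemma qbrA_natCast (b q : ℂ) (hb : b ≠ 0) (hq : q ≠ 0) (j : ℕ) :
    qbrA b q j = q ^ j * b⁻¹ * (b ^ 2 - ((q ^ 2)⁻¹) ^ j) := by
  rw [qbrA, zpow_neg, zpow_natCast, inv_sq_pow]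
  field_simp

lemma qbrAP_eq_mul_qFalling (a q : ℂ) (ha : a ≠ 0) (hq : q ≠ 0) (m : ℤ) (i : ℕ) :
    qbrAP a q (m + i - 1) i =
      q ^ (i * (i - 1) / 2) * (a * q ^ m)⁻¹ ^ i * qFalling (q ^ 2)⁻¹ ((a * q ^ m) ^ 2) i := by
  have hb : a * q ^ m ≠ 0 := mul_ne_zero ha (zpow_ne_zero m hq)
  calc qbrAP a q (m + i - 1) i = ∏ j ∈ range i, qbrA (a * q ^ m) q j := by
        rw [qbrAP, ← prod_range_reflect (fun j : ℕ => qbrA (a * q ^ m) q j)]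
        refine prod_congr rfl fun j hj => ?_
        rw [← qbrA_add a q hq]
        have := mem_range.mp hj
        congr 1
        omega
    _ = ∏ j ∈ range i, (q ^ j * (a * q ^ m)⁻¹ * ((a * q ^ m) ^ 2 - ((q ^ 2)⁻¹) ^ j)) :=
        prod_congr rfl fun j _ => qbrA_natCast _ q hb hq j
    _ = _ := by
        rw [prod_mul_distrib, prod_mul_distrib, prod_pow_eq_pow_sum, sum_range_id, prod_const,
          card_range, qFalling]

lemma mul_zpow_pred_pow (a q : ℂ) {n i : ℕ} (hin : i ≤ n) :
    (a * q ^ ((n : ℤ) - 1)) ^ i =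
      a ^ i * q ^ (i * (i - 1) / 2) * q ^ (i * (n - i)) * q ^ (i * (i - 1) / 2) := by
  rw [mul_pow, mul_assoc, mul_assoc, ← pow_add, ← pow_add, ← zpow_natCast (q ^ _) i, ← zpow_mul,
    ← zpow_natCast q]
  congr 2
  have ht := Nat.div_two_mul_two_of_even (Nat.even_mul_pred_self i)
  generalize i * (i - 1) / 2 = t at ht ⊢
  rcases i with _ | k
  · simp at ht ⊢
    omega
  · simp only [Nat.add_sub_cancel] at ht
    have ht' : (t : ℤ) * 2 = (k + 1) * k := by exact_mod_cast ht
    push_cast [Nat.cast_sub hin]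
    linear_combination -ht'

theorem statement_0 (a q : ℂ) (ha : a ≠ 0) (hq : q ≠ 0) (n : ℕ)
    (hroot : ∀ k : ℕ, 1 ≤ k → k ≤ n → q ^ (2 * k) ≠ 1) :
    a ^ (2 * n) * q ^ (2 * n * (n - 1)) =
      ∑ i ∈ Finset.range (n + 1),
        a ^ i * q ^ (i * (i - 1) / 2) * qbinom q n i *
          qbrAP a q ((n : ℤ) + (i : ℤ) - 2) i := by
  have hlhs : a ^ (2 * n) * q ^ (2 * n * (n - 1)) = ((a * q ^ ((n : ℤ) - 1)) ^ 2) ^ n := by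
    rw [← pow_mul, mul_pow, ← zpow_natCast (q ^ _) (2 * n), ← zpow_mul, ← zpow_natCast q]
    congr 2
    rcases n with _ | n
    · simp
    · push_cast
      ring
  rw [hlhs, pow_eq_sum_gaussBinom_mul_qFalling (q ^ 2)⁻¹]
  refine sum_congr rfl fun i hi => ?_
  have hin : i ≤ n := Nat.lt_succ_iff.mp (mem_range.mp hi)
  rw [qbinom_eq_mul_gaussBinom q hq hin hroot, show (n : ℤ) + i - 2 = ((n : ℤ) - 1) + i - 1 by ring,
    qbrAP_eq_mul_qFalling a q ha hq, inv_pow, mul_zpow_pred_pow a q hin]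
  field_simp
end

section
/- Let n ≥ 0 be an integer and a, q nonzero complex numbers with q^{2k} ≠ 1 for 1 ≤ k ≤ n. For integers 0 ≤ j ≤ i ≤ n define κ_{i,j} = 2n(n−1) − n(i+j) − i(i−3)/2 + j(j+1)/2 and λ_{i,j} = a^{2n−i−j} q^{κ_{i,j}} · [i choose j]_q · {n+i−j−2; a}_{i−j}. Then for every integer i with 0 ≤ i ≤ n, a^{2n} q^{2n(n−1)} = Σ_{j=0}^{i} λ_{i,j}. -/
open Finset

/-- The exponent `κ_{i,j} = 2n(n−1) − n(i+j) − i(i−3)/2 + j(j+1)/2`. -/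
def kap (n i j : ℕ) : ℤ :=
  2 * (n : ℤ) * ((n : ℤ) - 1) - (n : ℤ) * ((i : ℤ) + (j : ℤ))
    - (i : ℤ) * ((i : ℤ) - 3) / 2 + (j : ℤ) * ((j : ℤ) + 1) / 2

/-- The entry `λ_{i,j} = a^{2n−i−j} q^{κ_{i,j}} [i choose j]_q {n+i−j−2; a}_{i−j}`. -/
noncomputable def lamE (a q : ℂ) (n i j : ℕ) : ℂ :=
  a ^ (2 * (n : ℤ) - (i : ℤ) - (j : ℤ)) * q ^ (kap n i j) * qbinom q i j *
    qbrAP a q ((n : ℤ) + (i : ℤ) - (j : ℤ) - 2) (i - j)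

/-!
With the weights `w i j = a⁻² q^(-2(n+i-j-1))` (`lamWeight`), consecutive rows are related by
`λ_{i+1,j} = (1 - w i j) λ_{i,j} + w i (j-1) λ_{i,j-1}`, where entries outside `0 ≤ j ≤ i` count
as zero. This follows from the q-Pascal rule `[i+1, j+1] = q^(j+1) [i, j+1] + q^(j-i) [i, j]`,
itself a consequence of `{s + t} = q^s {t} + q^(-t) {s}`, together with
`{N; a} = a q^N - a⁻¹ q^(-N)`. So the row sums telescope to the previous row sum, and row `0` is
the single entry `a^(2n) q^(2n(n-1))`. The condition `q^(2k) ≠ 1` for `1 ≤ k ≤ n` makes the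
q-factorials `{k}!`, `k ≤ n`, invertible.
-/

section QBracket

variable {q : ℂ}

lemma qbr_add (hq : q ≠ 0) (s t : ℤ) : qbr q (s + t) = q ^ s * qbr q t + q ^ (-t) * qbr q s := by
  simp only [qbr, neg_add, zpow_add₀ hq]
  ring

lemma qbr_natCast_ne_zero (hq : q ≠ 0) {k : ℕ} (hk : q ^ (2 * k) ≠ 1) : qbr q k ≠ 0 := by
  have : qbr q k = q ^ (-(k : ℤ)) * (q ^ (2 * k) - 1) := by
    rw [qbr, mul_sub, mul_one, pow_mul, ← zpow_natCast, ← zpow_natCast, ← zpow_mul, ← zpow_add₀ hq]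
    ring_nf
  rw [this]
  exact mul_ne_zero (zpow_ne_zero _ hq) (sub_ne_zero.mpr hk)

lemma qfac_zero : qfac q 0 = 1 := by simp [qfac, qbrP]

lemma qfac_succ (m : ℕ) : qfac q (m + 1) = qbr q (m + 1) * qfac q m := by
  rw [qfac, qbrP, prod_range_succ', mul_comm, qfac, qbrP]
  congr 1
  exact prod_congr rfl fun k _ => by push_cast; ring_nf

lemma qfac_ne_zero (hq : q ≠ 0) {m : ℕ} (hm : ∀ k : ℕ, 1 ≤ k → k ≤ m → q ^ (2 * k) ≠ 1) :
    qfac q m ≠ 0 := by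
  induction m with
  | zero => simp [qfac_zero]
  | succ m ih =>
    rw [qfac_succ]
    exact mul_ne_zero (mod_cast qbr_natCast_ne_zero hq (hm (m + 1) (by omega) le_rfl))
      (ih fun k hk hkm => hm k hk (by omega))

lemma qfac_ne_zero_of_le {m i : ℕ} (hi : qfac q i ≠ 0) (hmi : m ≤ i) : qfac q m ≠ 0 := by
  induction i, hmi using Nat.le_induction with
  | base => exact hi
  | succ i _ ih => exact ih (right_ne_zero_of_mul (qfac_succ (q := q) i ▸ hi))

lemma qbinom_zero_right {m : ℕ} (hm : qfac q m ≠ 0) : qbinom q m 0 = 1 := by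
  rw [qbinom, Nat.sub_zero, qfac_zero, one_mul, div_self hm]

lemma qbinom_self {m : ℕ} (hm : qfac q m ≠ 0) : qbinom q m m = 1 := by
  rw [qbinom, Nat.sub_self, qfac_zero, mul_one, div_self hm]

lemma qbinom_succ_succ (hq : q ≠ 0) {j d : ℕ} (hj : qfac q (j + 1) ≠ 0) (hd : qfac q (d + 1) ≠ 0) :
    qbinom q (j + d + 2) (j + 1) =
      q ^ (j + 1) * qbinom q (j + d + 1) (j + 1) + q ^ (-(d + 1 : ℤ)) * qbinom q (j + d + 1) j := by
  have hbr : qbr q (j + d + 2 : ℕ) =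
      q ^ (j + 1 : ℤ) * qbr q (d + 1) + q ^ (-(d + 1 : ℤ)) * qbr q (j + 1) := by
    rw [← qbr_add hq]; push_cast; ring_nf
  simp only [qbinom, show j + d + 2 - (j + 1) = d + 1 by omega,
    show j + d + 1 - (j + 1) = d by omega, show j + d + 1 - j = d + 1 by omega]
  rw [qfac_succ] at hj hd
  obtain ⟨hbj, hfj⟩ := mul_ne_zero_iff.mp hj
  obtain ⟨hbd, hfd⟩ := mul_ne_zero_iff.mp hd
  rw [show j + d + 2 = (j + d + 1) + 1 from rfl, qfac_succ, qfac_succ (q := q) j,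
    qfac_succ (q := q) d]
  push_cast at hbr ⊢
  rw [show (j : ℤ) + d + 1 + 1 = j + d + 2 by ring, hbr, ← zpow_natCast]
  push_cast
  field_simp

end QBracket

lemma qbrAP_succ (a q : ℂ) (m : ℤ) (s : ℕ) :
    qbrAP a q m (s + 1) = qbrA a q m * qbrAP a q (m - 1) s := by
  rw [qbrAP, prod_range_succ', mul_comm, qbrAP]
  simp only [Nat.cast_add, Nat.cast_one, Nat.cast_zero, sub_zero, sub_add_eq_sub_sub_swap]

lemma kap_succ_left (n i j : ℕ) : kap n (i + 1) j = kap n i j - n - i + 1 := by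
  have h : ((i + 1 : ℕ) : ℤ) * ((i + 1 : ℕ) - 3) = i * ((i : ℤ) - 3) + (i - 1) * 2 := by
    push_cast; ring
  rw [kap, kap, h, Int.add_mul_ediv_right _ _ two_ne_zero]
  push_cast; ring

lemma kap_succ_right (n i j : ℕ) : kap n i (j + 1) = kap n i j - n + j + 1 := by
  have h : ((j + 1 : ℕ) : ℤ) * ((j + 1 : ℕ) + 1) = j * ((j : ℤ) + 1) + (j + 1) * 2 := by
    push_cast; ring
  rw [kap, kap, h, Int.add_mul_ediv_right _ _ two_ne_zero]
  push_cast; ring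

lemma kap_zero_zero (n : ℕ) : kap n 0 0 = ((2 * n * (n - 1) : ℕ) : ℤ) := by
  rcases n with _ | n
  · rfl
  · simp [kap]

lemma sum_range_succ_succ_eq_of_telescoping {M : Type*} [AddCommGroup M] {f g G : ℕ → M}
    {i : ℕ}
    (h_zero : g 0 = f 0 - G 0) (h_succ : ∀ j < i, g (j + 1) = f (j + 1) - G (j + 1) + G j)
    (h_last : g (i + 1) = G i) :
    ∑ j ∈ range (i + 2), g j = ∑ j ∈ range (i + 1), f j := by
  have h_mid : ∑ j ∈ range i, g (j + 1) = ∑ j ∈ range i, f (j + 1) - (G i - G 0) := by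
    rw [← sum_range_sub, ← sum_sub_distrib]
    exact sum_congr rfl fun j hj => by rw [h_succ j (mem_range.mp hj)]; abel
  rw [sum_range_succ', sum_range_succ, h_mid, h_last, h_zero, sum_range_succ' f]
  abel

noncomputable def lamWeight (a q : ℂ) (n i j : ℕ) : ℂ :=
  (a ^ 2 * q ^ (2 * ((n : ℤ) + i - j - 1)))⁻¹

section Recurrence

variable {a q : ℂ} {n : ℕ}

lemma lamE_zero_zero : lamE a q n 0 0 = a ^ (2 * n) * q ^ (2 * n * (n - 1)) := by
  simp only [lamE, kap_zero_zero, qbinom_self (q := q) (m := 0) (by simp [qfac_zero]), Nat.sub_self,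
    qbrAP, prod_range_zero, mul_one, Nat.cast_zero, sub_zero, zpow_natCast]
  norm_cast

lemma lamE_succ_zero (ha : a ≠ 0) (hq : q ≠ 0) {i : ℕ} (hi : qfac q (i + 1) ≠ 0) :
    lamE a q n (i + 1) 0 = lamE a q n i 0 - lamWeight a q n i 0 * lamE a q n i 0 := by
  have hP : qbrAP a q (n + (i + 1 : ℕ) - 2) (i + 1) =
      qbrA a q (n + i - 1) * qbrAP a q (n + i - 2) i := by
    rw [qbrAP_succ]; push_cast; ring_nf
  simp only [lamE, lamWeight, Nat.sub_zero, Nat.cast_zero, sub_zero]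
  rw [hP, qbinom_zero_right hi, qbinom_zero_right (qfac_ne_zero_of_le hi i.le_succ),
    kap_succ_left, qbrA]
  push_cast
  simp only [mul_add, mul_sub, zpow_add₀ ha, zpow_add₀ hq, zpow_sub₀ ha, zpow_sub₀ hq, zpow_neg,
    zpow_mul, zpow_natCast, zpow_one]
  field_simp
  ring

lemma lamE_succ_self (ha : a ≠ 0) (hq : q ≠ 0) {i : ℕ} (hi : qfac q (i + 1) ≠ 0) :
    lamE a q n (i + 1) (i + 1) = lamWeight a q n i i * lamE a q n i i := by
  simp only [lamE, lamWeight, Nat.sub_self, qbrAP, prod_range_zero]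
  rw [qbinom_self hi, qbinom_self (qfac_ne_zero_of_le hi i.le_succ), kap_succ_left, kap_succ_right]
  push_cast
  simp only [mul_add, mul_sub, zpow_add₀ ha, zpow_add₀ hq, zpow_sub₀ ha, zpow_sub₀ hq,
    zpow_mul, zpow_natCast, zpow_one]
  field_simp
  ring

lemma lamE_succ_succ (ha : a ≠ 0) (hq : q ≠ 0) {i j : ℕ} (hi : qfac q (i + 1) ≠ 0) (hji : j < i) :
    lamE a q n (i + 1) (j + 1) =
      lamE a q n i (j + 1) - lamWeight a q n i (j + 1) * lamE a q n i (j + 1)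
        + lamWeight a q n i j * lamE a q n i j := by
  obtain ⟨d, rfl⟩ : ∃ d, i = j + d + 1 := ⟨i - j - 1, by omega⟩
  have hP₁ : qbrAP a q (n + (j + d + 1 + 1 : ℕ) - (j + 1 : ℕ) - 2) (d + 1) =
      qbrA a q (n + d - 1) * qbrAP a q (n + d - 2) d := by
    rw [qbrAP_succ]; push_cast; ring_nf
  have hP₂ : qbrAP a q (n + (j + d + 1 : ℕ) - (j + 1 : ℕ) - 2) d = qbrAP a q (n + d - 2) d := by
    push_cast; ring_nf
  have hP₃ : qbrAP a q (n + (j + d + 1 : ℕ) - j - 2) (d + 1) =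
      qbrA a q (n + d - 1) * qbrAP a q (n + d - 2) d := by
    rw [qbrAP_succ]; push_cast; ring_nf
  simp only [lamE, lamWeight, show j + d + 1 + 1 - (j + 1) = d + 1 by omega,
    show j + d + 1 - (j + 1) = d by omega, show j + d + 1 - j = d + 1 by omega]
  rw [hP₁, hP₂, hP₃, show j + d + 1 + 1 = j + d + 2 from rfl,
    qbinom_succ_succ hq (qfac_ne_zero_of_le hi (by omega)) (qfac_ne_zero_of_le hi (by omega)),
    show j + d + 2 = j + d + 1 + 1 from rfl, kap_succ_left n (j + d + 1) (j + 1),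
    kap_succ_right n (j + d + 1) j, qbrA]
  push_cast
  simp only [mul_add, mul_sub, zpow_add₀ ha, zpow_add₀ hq, zpow_sub₀ ha, zpow_sub₀ hq, zpow_neg,
    zpow_mul, zpow_natCast, zpow_one]
  field_simp
  ring

end Recurrence

theorem statement_1 (a q : ℂ) (ha : a ≠ 0) (hq : q ≠ 0) (n : ℕ)
    (hroot : ∀ k : ℕ, 1 ≤ k → k ≤ n → q ^ (2 * k) ≠ 1)
    (i : ℕ) (hi : i ≤ n) :
    (a : ℂ) ^ (2 * n) * q ^ (2 * n * (n - 1)) =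
      ∑ j ∈ Finset.range (i + 1), lamE a q n i j := by
  have hn : qfac q n ≠ 0 := qfac_ne_zero hq hroot
  induction i with
  | zero => rw [sum_range_one, lamE_zero_zero]
  | succ i ih =>
    have hi' : qfac q (i + 1) ≠ 0 := qfac_ne_zero_of_le hn hi
    rw [ih (by omega), ← sum_range_succ_succ_eq_of_telescoping
      (G := fun j => lamWeight a q n i j * lamE a q n i j) (lamE_succ_zero ha hq hi')
      (fun j hj => lamE_succ_succ ha hq hi' hj) (lamE_succ_self ha hq hi')]
end
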